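/- arXiv:0809.1791 — 4 statements merged into one kernel-verified Lean document; each statement's English description precedes it below -/
import Mathlib

section
/- The subring of ℂ[x₁,x₂,x₃,x₄] consisting of polynomials invariant under the group H ≅ (ℤ/5ℤ)³ (acting by h₁,h₂,h₃ as above) is generated by the monomials z₀ = x₁x₂x₃x₄ and z_i = x_i⁵ for i = 1,...,4, and these satisfy the relation z₀⁵ = z₁z₂z₃z₄. -/
/-!
The automorphism `xᵢ ↦ ζ^{aᵢ} xᵢ` multiplies the monomial `x^d` by `ζ^{∑ aᵢ dᵢ}`, so a polynomial
is invariant under the three generators of `H` iff every exponent vector `d` of its support has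
`d₁ ≡ d₂ ≡ d₃ ≡ d₄ (mod 5)`. Writing `dᵢ = 5 qᵢ + r` exhibits `x^d` as `z₁^{q₁} ⋯ z₄^{q₄} z₀^r`;
conversely `z₀` and the `zᵢ` are visibly invariant.
-/

namespace MvPolynomial

section DiagonalScaling

variable {σ K : Type*} [Field K]

noncomputable def diagonalScaling (ζ : K) (a : σ → ℤ) :
    MvPolynomial σ K →ₐ[K] MvPolynomial σ K :=
  aeval fun i => ζ ^ a i • X i

variable {ζ : K}

theorem diagonalScaling_monomial (hζ : ζ ≠ 0) (a : σ → ℤ) (d : σ →₀ ℕ) (c : K) :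
    diagonalScaling ζ a (monomial d c) = ζ ^ Finsupp.weight a d • monomial d c := by
  induction d using Finsupp.induction with
  | zero => simp [diagonalScaling]
  | single_add i k d _ _ ih =>
    rw [monomial_single_add, map_mul, ih, map_pow, diagonalScaling, aeval_X, map_add,
      Finsupp.weight_single, zpow_add₀ hζ, smul_pow, smul_mul_smul_comm, ← zpow_natCast,
      ← zpow_mul, nsmul_eq_mul, mul_comm (k : ℤ)]

theorem coeff_diagonalScaling (hζ : ζ ≠ 0) (a : σ → ℤ) (p : MvPolynomial σ K) (d : σ →₀ ℕ) :
    coeff d (diagonalScaling ζ a p) = ζ ^ Finsupp.weight a d * coeff d p := by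
  induction p using MvPolynomial.induction_on' with
  | monomial u c =>
    classical
    rw [diagonalScaling_monomial hζ, coeff_smul, coeff_monomial]
    split_ifs with h <;> simp [h]
  | add p q hp hq => simp [hp, hq, mul_add]

theorem diagonalScaling_eq_self_iff {n : ℕ} (hζ : IsPrimitiveRoot ζ n) (hn : n ≠ 0)
    (a : σ → ℤ) (p : MvPolynomial σ K) :
    diagonalScaling ζ a p = p ↔ ∀ d ∈ p.support, (n : ℤ) ∣ Finsupp.weight a d := by
  simp only [MvPolynomial.ext_iff, coeff_diagonalScaling (hζ.ne_zero hn), mem_support_iff,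
    ← hζ.zpow_eq_one_iff_dvd, mul_left_eq_self₀]
  exact forall_congr' fun d => by tauto

theorem diagonalScaling_monomial_eq_self {n : ℕ} (hζ : IsPrimitiveRoot ζ n) (hn : n ≠ 0)
    (a : σ → ℤ) {d : σ →₀ ℕ} (hd : (n : ℤ) ∣ Finsupp.weight a d) (c : K) :
    diagonalScaling ζ a (monomial d c) = monomial d c :=
  (diagonalScaling_eq_self_iff hζ hn a _).2 fun d' hd' => by
    rwa [Finset.mem_singleton.1 (support_monomial_subset hd')]

theorem diagonalScaling_X_pow_eq_self {n : ℕ} (hζ : IsPrimitiveRoot ζ n) (hn : n ≠ 0)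
    (a : σ → ℤ) (i : σ) : diagonalScaling ζ a (X i ^ n) = X i ^ n := by
  rw [X_pow_eq_monomial]
  exact diagonalScaling_monomial_eq_self hζ hn a (by simp [Finsupp.weight_single]) 1

theorem diagonalScaling_prod_X_eq_self [Fintype σ] {n : ℕ} (hζ : IsPrimitiveRoot ζ n)
    (hn : n ≠ 0) {a : σ → ℤ} (ha : (n : ℤ) ∣ ∑ i, a i) :
    diagonalScaling ζ a (∏ i, X i) = ∏ i, X i := by
  have hprod : (∏ i, X i : MvPolynomial σ K) = monomial (∑ i, Finsupp.single i 1) 1 := by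
    simp [monomial_sum_one, X]
  rw [hprod]
  exact diagonalScaling_monomial_eq_self hζ hn a (by simpa [Finsupp.weight_single]) 1

end DiagonalScaling

theorem monomial_mem_of_prod_X_mem {σ R : Type*} [Fintype σ] [CommSemiring R]
    {A : Subalgebra R (MvPolynomial σ R)} {n r : ℕ} (hprod : ∏ i, X i ∈ A)
    (hpow : ∀ i, X i ^ n ∈ A) {d : σ →₀ ℕ} (hd : ∀ i, d i % n = r) (c : R) :
    monomial d c ∈ A := by
  have hsplit : monomial d c = C c * ((∏ i, (X i ^ n) ^ (d i / n)) * (∏ i, X i) ^ r) := by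
    rw [monomial_eq, Finsupp.prod_fintype _ _ fun _ => pow_zero _, ← Finset.prod_pow,
      ← Finset.prod_mul_distrib]
    congr 1
    refine Finset.prod_congr rfl fun i _ => ?_
    rw [← pow_mul, ← pow_add, ← hd i, Nat.div_add_mod]
  rw [hsplit]
  exact mul_mem (A.algebraMap_mem c)
    (mul_mem (prod_mem fun i _ => pow_mem (hpow i) _) (pow_mem hprod r))

end MvPolynomial

open MvPolynomial in
theorem stmt_10 (ζ : ℂ) (hζ : IsPrimitiveRoot ζ 5) :
    let σ : (Fin 4 → ℤ) → (MvPolynomial (Fin 4) ℂ →ₐ[ℂ] MvPolynomial (Fin 4) ℂ) :=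
      fun a => aeval (fun i => ζ ^ (a i) • X i)
    let z0 : MvPolynomial (Fin 4) ℂ := X 0 * X 1 * X 2 * X 3
    let z : Fin 4 → MvPolynomial (Fin 4) ℂ := fun i => X i ^ 5
    (∀ p : MvPolynomial (Fin 4) ℂ,
        (σ ![-1, 1, 0, 0] p = p ∧ σ ![-1, 0, 1, 0] p = p ∧ σ ![-1, 0, 0, 1] p = p) ↔
          p ∈ Algebra.adjoin ℂ ({z0, z 0, z 1, z 2, z 3} : Set (MvPolynomial (Fin 4) ℂ))) ∧
      z0 ^ 5 = z 0 * z 1 * z 2 * z 3 := by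
  intro σ z0 z
  have hz0 : z0 = ∏ i, X i := (Fin.prod_univ_four _).symm
  refine ⟨fun p => ⟨fun ⟨h1, h2, h3⟩ => ?_, fun hp => ?_⟩, by ring⟩
  · rw [p.as_sum]
    refine Subalgebra.sum_mem _ fun d hd => ?_
    have e1 := (diagonalScaling_eq_self_iff hζ (by norm_num) _ p).1 h1 d hd
    have e2 := (diagonalScaling_eq_self_iff hζ (by norm_num) _ p).1 h2 d hd
    have e3 := (diagonalScaling_eq_self_iff hζ (by norm_num) _ p).1 h3 d hd
    simp only [Finsupp.weight_eq_sum, Fin.sum_univ_four, Matrix.cons_val_zero, Matrix.cons_val_one,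
      Matrix.cons_val, Int.nsmul_eq_mul, mul_neg, mul_one, mul_zero, add_zero] at e1 e2 e3
    refine monomial_mem_of_prod_X_mem (n := 5) (r := d 0 % 5) ?_ (fun i => ?_) (fun i => ?_) _
    · exact hz0 ▸ Algebra.subset_adjoin (by simp)
    · fin_cases i <;> exact Algebra.subset_adjoin (by simp [z])
    · fin_cases i <;> simp only [Fin.zero_eta, Fin.mk_one, Fin.reduceFinMk] <;> omega
  · have fixed_of_sum_eq_zero (a : Fin 4 → ℤ) (ha : ∑ i, a i = 0) : σ a p = p := by
      refine (AlgHom.mem_equalizer _ (AlgHom.id ℂ _) p).1 (Algebra.adjoin_le ?_ hp)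
      rintro q (rfl | rfl | rfl | rfl | rfl)
      · exact hz0 ▸ diagonalScaling_prod_X_eq_self hζ (by norm_num) (by simp [ha])
      all_goals exact diagonalScaling_X_pow_eq_self hζ (by norm_num) a _
    refine ⟨fixed_of_sum_eq_zero _ ?_, fixed_of_sum_eq_zero _ ?_, fixed_of_sum_eq_zero _ ?_⟩ <;>
      simp [Fin.sum_univ_four]
end

section
/- Let A be an n×n integer matrix with AB = dI, where B is an integer matrix and the row sums of B all equal m and column sums of B all equal m, d = mn. Substituting x_j = ∏ₖ y_k^{b_{jk}} into F_{A,t} = Σ_i ∏_j x_j^{a_{ij}} − nt·∏_j x_j yields Σ_i y_i^d − nt·(∏ₖ y_k)^m. -/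
/-!
Substituting `x = y^B` (i.e. `x_j = ∏ₖ y_k ^ b_{jk}`) into a Laurent monomial `x^a` gives `y^(aB)`,
so the monomials `x^{A_i}` become `y^{(AB)_i} = y_i^d`, and `∏ⱼ x_j = y^{(1,…,1)B}` becomes
`∏ₖ y_k^m` because every column of `B` sums to `m`.
-/

open Finset

section MonomialSubstitution

variable {G ι κ : Type*} [CommGroup G]

theorem Finset.prod_zpow_eq_zpow_sum (s : Finset ι) (f : ι → ℤ) (a : G) :
    ∏ i ∈ s, a ^ f i = a ^ ∑ i ∈ s, f i := by
  classical
  induction s using Finset.induction with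
  | empty => simp
  | insert _ _ h ih => rw [prod_insert h, sum_insert h, zpow_add, ih]

variable [Fintype ι] [Fintype κ]

theorem prod_prod_zpow_zpow (B : Matrix ι κ ℤ) (a : ι → ℤ) (y : κ → G) :
    ∏ j, (∏ k, y k ^ B j k) ^ a j = ∏ k, y k ^ ∑ j, a j * B j k := by
  simp only [← prod_zpow, ← zpow_mul]
  rw [prod_comm]
  refine prod_congr rfl fun k _ => ?_
  simp only [mul_comm, prod_zpow_eq_zpow_sum]

theorem prod_prod_zpow (B : Matrix ι κ ℤ) (y : κ → G) :
    ∏ j, ∏ k, y k ^ B j k = ∏ k, y k ^ ∑ j, B j k := by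
  simpa using prod_prod_zpow_zpow B 1 y

theorem prod_prod_zpow_zpow_matrix_mul {μ : Type*} [Fintype μ] (A : Matrix μ ι ℤ)
    (B : Matrix ι κ ℤ) (y : κ → G) (i : μ) :
    ∏ j, (∏ k, y k ^ B j k) ^ A i j = ∏ k, y k ^ (A * B) i k := by
  simp only [prod_prod_zpow_zpow, Matrix.mul_apply]

theorem prod_zpow_smul_one [DecidableEq κ] (d : ℤ) (y : κ → G) (i : κ) :
    ∏ k, y k ^ (d • (1 : Matrix κ κ ℤ)) i k = y i ^ d := by
  rw [prod_eq_single i (fun k _ hk => by simp [Matrix.one_apply_ne' hk]) (by simp)]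
  simp

end MonomialSubstitution

theorem stmt_13_general {K : Type*} [Field K] (n m : ℕ) (d : ℤ)
    (A B : Matrix (Fin n) (Fin n) ℤ)
    (hAB : A * B = d • (1 : Matrix (Fin n) (Fin n) ℤ))
    (hcolB : ∀ k, ∑ j, B j k = (m : ℤ))
    (y : Fin n → Kˣ) (t : K) :
    let x : Fin n → Kˣ := fun j => ∏ k, y k ^ B j k
    (∑ i, ((∏ j, x j ^ A i j : Kˣ) : K)) - n * t * ((∏ j, x j : Kˣ) : K) =
      (∑ i, ((y i ^ d : Kˣ) : K)) - n * t * ((∏ k, y k ^ (m : ℤ) : Kˣ) : K) := by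
  intro x
  have hmonomials : ∀ i, ∏ j, x j ^ A i j = y i ^ d := fun i => by
    rw [prod_prod_zpow_zpow_matrix_mul, hAB, prod_zpow_smul_one]
  have hproduct : ∏ j, x j = ∏ k, y k ^ (m : ℤ) := by
    simp only [x, prod_prod_zpow, hcolB]
  simp only [hmonomials, hproduct]

theorem stmt_13 {K : Type*} [Field K] (n m : ℕ) (d : ℤ) (hd : d = m * n)
    (A B : Matrix (Fin n) (Fin n) ℤ)
    (hAB : A * B = d • (1 : Matrix (Fin n) (Fin n) ℤ))
    (hrowB : ∀ j, ∑ k, B j k = (m : ℤ)) (hcolB : ∀ k, ∑ j, B j k = (m : ℤ))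
    (y : Fin n → Kˣ) (t : K) :
    let x : Fin n → Kˣ := fun j => ∏ k, y k ^ B j k
    (∑ i, ((∏ j, x j ^ A i j : Kˣ) : K)) - n * t * ((∏ j, x j : Kˣ) : K) =
      (∑ i, ((y i ^ d : Kˣ) : K)) - n * t * ((∏ k, y k ^ (m : ℤ) : Kˣ) : K) :=
  stmt_13_general n m d A B hAB hcolB y t
end

section
/- The group Γ_d := {a ∈ (ℤ/dℤ)ⁿ : a₁+⋯+aₙ ≡ 0 mod n} / ⟨(1,1,...,1)⟩, where d = mn, is isomorphic to μ_m × μ_d^{n−2}, i.e., to (ℤ/mℤ) × (ℤ/dℤ)^{n−2}. -/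
/-!
Every class of `S` modulo the diagonal `⟨(1, …, 1)⟩` has a unique representative with first
coordinate `0`. Such a representative is determined by its last `n - 2` coordinates, which are
arbitrary, together with its coordinate sum, which is an arbitrary element of the kernel
`nℤ/dℤ` of reduction `ℤ/d → ℤ/n`; multiplication by `n` identifies `ℤ/m` with that kernel.
-/

open Finset Matrix

theorem QuotientAddGroup.bijective_mk'_comp {A B : Type*} [AddCommGroup A] [AddGroup B]
    {H : AddSubgroup A} {f : B →+ A} (hker : ∀ b, f b ∈ H → b = 0)
    (hcover : ∀ a, ∃ b, a - f b ∈ H) : Function.Bijective ((mk' H).comp f) := by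
  refine ⟨(injective_iff_map_eq_zero _).2 fun b hb => hker b ((eq_zero_iff _).1 hb), fun q => ?_⟩
  induction q using QuotientAddGroup.induction_on with
  | H a =>
    obtain ⟨b, hb⟩ := hcover a
    exact ⟨b, eq_iff_sub_mem.2 (by simpa using H.neg_mem hb)⟩

namespace ZMod

def mulRightHom (m n : ℕ) : ZMod m →+ ZMod (m * n) :=
  lift m ⟨zmultiplesHom _ (n : ZMod (m * n)), by simp [← Nat.cast_mul]⟩

theorem mulRightHom_intCast (m n : ℕ) (z : ℤ) :
    mulRightHom m n z = ((z * n : ℤ) : ZMod (m * n)) := by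
  simp [mulRightHom, lift_coe]

theorem mulRightHom_injective (m : ℕ) {n : ℕ} (hn : n ≠ 0) :
    Function.Injective (mulRightHom m n) := by
  refine (injective_iff_map_eq_zero _).2 fun t ht => ?_
  obtain ⟨z, rfl⟩ := intCast_surjective t
  rw [mulRightHom_intCast, intCast_zmod_eq_zero_iff_dvd, Nat.cast_mul,
    Int.mul_dvd_mul_iff_right (by exact_mod_cast hn)] at ht
  exact (intCast_zmod_eq_zero_iff_dvd z m).2 ht

theorem range_mulRightHom (m n : ℕ) (h : n ∣ m * n) :
    (mulRightHom m n).range = (castHom h (ZMod n)).toAddMonoidHom.ker := by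
  ext x
  rw [AddMonoidHom.mem_range, AddMonoidHom.mem_ker]
  constructor
  · rintro ⟨t, rfl⟩
    obtain ⟨w, rfl⟩ := intCast_surjective t
    simp [mulRightHom_intCast]
  · obtain ⟨z, rfl⟩ := intCast_surjective x
    rintro hz
    obtain ⟨w, rfl⟩ : (n : ℤ) ∣ z := by simpa [intCast_zmod_eq_zero_iff_dvd] using hz
    exact ⟨w, by rw [mulRightHom_intCast, mul_comm w]⟩

noncomputable def kerCastHomEquiv (m : ℕ) {n : ℕ} (hn : n ≠ 0) (h : n ∣ m * n) :
    (castHom h (ZMod n)).toAddMonoidHom.ker ≃+ ZMod m :=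
  ((AddMonoidHom.ofInjective (mulRightHom_injective m hn)).trans
    (AddEquiv.addSubgroupCongr (range_mulRightHom m n h))).symm

variable {d : ℕ} (K : AddSubgroup (ZMod d)) (k : ℕ)

def zeroHeadTupleHom : K × (Fin k → ZMod d) →+ (Fin (k + 2) → ZMod d) where
  toFun p := vecCons 0 (vecCons (p.1 - ∑ j, p.2 j) p.2)
  map_zero' := by simp
  map_add' p q := by
    simp only [Prod.fst_add, Prod.snd_add, AddSubgroup.coe_add, Pi.add_apply, sum_add_distrib,
      cons_add_cons, add_zero]
    congr 2
    abel

variable {K k}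

@[simp]
theorem zeroHeadTupleHom_apply (p : K × (Fin k → ZMod d)) :
    zeroHeadTupleHom K k p = vecCons 0 (vecCons (p.1 - ∑ j, p.2 j) p.2) := rfl

theorem sum_zeroHeadTupleHom (p : K × (Fin k → ZMod d)) :
    ∑ i, zeroHeadTupleHom K k p i = p.1 := by
  simp [Fin.sum_univ_succ]

theorem zeroHeadTupleHom_injective : Function.Injective (zeroHeadTupleHom K k) := by
  refine (injective_iff_map_eq_zero _).2 fun ⟨x, c⟩ h => ?_
  simp only [zeroHeadTupleHom_apply, ← cons_zero_zero, vecCons_inj] at h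
  obtain ⟨-, hx, rfl⟩ := h
  simpa [Prod.ext_iff] using hx

theorem exists_zeroHeadTupleHom_eq {a : Fin (k + 2) → ZMod d} (ha : a 0 = 0)
    (hK : ∑ i, a i ∈ K) :
    ∃ p, zeroHeadTupleHom K k p = a := by
  refine ⟨(⟨_, hK⟩, fun j => a j.succ.succ), ?_⟩
  ext i
  refine Fin.cases ?_ (fun i => Fin.cases ?_ (fun j => ?_) i) i
  · simp [ha]
  · simp [Fin.sum_univ_succ, ha]
  · simp

theorem nonempty_quotient_closure_ones_addEquiv {S : AddSubgroup (Fin (k + 2) → ZMod d)}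
    (hS : ∀ a, a ∈ S ↔ ∑ i, a i ∈ K) (ones : S)
    (hones : (ones : Fin (k + 2) → ZMod d) = fun _ => 1) :
    Nonempty ((S ⧸ AddSubgroup.closure {ones}) ≃+ K × (Fin k → ZMod d)) := by
  let f := (zeroHeadTupleHom K k).codRestrict S fun p => (hS _).2 (by
    rw [sum_zeroHeadTupleHom]; exact p.1.2)
  have hker : ∀ p, f p ∈ AddSubgroup.closure {ones} → p = 0 := by
    intro p hp
    obtain ⟨z, hz⟩ := AddSubgroup.mem_closure_singleton.1 hp
    replace hz : z • (fun _ => 1 : Fin (k + 2) → ZMod d) = zeroHeadTupleHom K k p := by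
      rw [← hones]; exact congrArg Subtype.val hz
    have hz0 : z • (1 : ZMod d) = 0 := by simpa using congrFun hz 0
    refine zeroHeadTupleHom_injective ?_
    rw [← hz, map_zero]
    ext
    simp [hz0]
  have hcover : ∀ a : S, ∃ p, a - f p ∈ AddSubgroup.closure {ones} := by
    intro a
    obtain ⟨z, hz⟩ := intCast_surjective ((a : Fin (k + 2) → ZMod d) 0)
    set a' := a - z • ones
    have ha'0 : (a' : Fin (k + 2) → ZMod d) 0 = 0 := by
      simp [a', hones, ← hz]
    obtain ⟨p, hp⟩ := exists_zeroHeadTupleHom_eq ha'0 ((hS _).1 a'.2)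
    refine ⟨p, ?_⟩
    have hfp : f p = a' := Subtype.ext hp
    rw [hfp, sub_sub_cancel]
    exact AddSubgroup.mem_closure_singleton.2 ⟨z, rfl⟩
  exact ⟨(AddEquiv.ofBijective _ (QuotientAddGroup.bijective_mk'_comp hker hcover)).symm⟩

end ZMod

theorem stmt_15_general (n m : ℕ) (hn : 2 ≤ n) (d : ℕ) (hd : d = m * n)
    (hdvd : n ∣ d)
    (S : AddSubgroup (Fin n → ZMod d))
    (hS : ∀ a, a ∈ S ↔ (ZMod.castHom hdvd (ZMod n)) (∑ i, a i) = 0)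
    (ones : S) (hones : (ones : Fin n → ZMod d) = fun _ => 1) :
    Nonempty ((S ⧸ AddSubgroup.closure {ones}) ≃+ (ZMod m × (Fin (n - 2) → ZMod d))) := by
  subst hd
  obtain ⟨k, rfl⟩ : ∃ k, n = k + 2 := ⟨n - 2, by omega⟩
  obtain ⟨e⟩ := ZMod.nonempty_quotient_closure_ones_addEquiv
    (K := (ZMod.castHom hdvd (ZMod (k + 2))).toAddMonoidHom.ker)
    (fun a => by rw [hS, AddMonoidHom.mem_ker]; rfl) ones hones
  exact ⟨e.trans ((ZMod.kerCastHomEquiv m (by omega) hdvd).prodCongr (AddEquiv.refl _))⟩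

theorem stmt_15 (n m : ℕ) (hn : 2 ≤ n) (hm : 0 < m) (d : ℕ) (hd : d = m * n)
    (hdvd : n ∣ d)
    (S : AddSubgroup (Fin n → ZMod d))
    (hS : ∀ a, a ∈ S ↔ (ZMod.castHom hdvd (ZMod n)) (∑ i, a i) = 0)
    (ones : S) (hones : (ones : Fin n → ZMod d) = fun _ => 1) :
    Nonempty ((S ⧸ AddSubgroup.closure {ones}) ≃+ (ZMod m × (Fin (n - 2) → ZMod d))) :=
  stmt_15_general n m hn d hd hdvd S hS ones hones
end

section
/- In the quotient group Γ = {a ∈ (ℤ/1025ℤ)⁵ : Σa_i ≡ 0 mod 5}/⟨(1,...,1)⟩, the image subgroup H_A under a ↦ Ba (with B = 1025·A⁻¹ for A = 4I+P) is cyclic of order 41, and the kernel Γ_A is isomorphic to (ℤ/5ℤ) × (ℤ/1025ℤ)³. -/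
/-!
Since `(-4)^5 = 1` in `ZMod 1025`, the circulant `B` has entries `(-4)^(j + 4 - k)`, so it is the
rank-one matrix `u vᵀ` with `u = ((-4)^j)_j` and `v` its first row: `B a = ⟨v, a⟩ u`. All entries
of `u` are `1` mod 5, so `t u` is a constant vector exactly when `5 t = 0`. As `v ≡ 1` mod 5,
`⟨v, a⟩` runs over `5 ℤ/1025ℤ` on `Γ`, so the image is generated by the class of `5 u`, of
order 41. The kernel consists of the classes with `⟨v, a⟩ ∈ 205 ℤ/1025ℤ`; normalising `a₀ = 0`,
the entries `a₁, a₂, a₃` are free and `a₄` is determined modulo 205, up to a choice in `ZMod 5`.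
-/

open Matrix

namespace ZMod

variable {m n N : ℕ}

lemma castHom_eq_zero_iff_exists_eq_mul (h : m ∣ N) (t : ZMod N) :
    castHom h (ZMod m) t = 0 ↔ ∃ s, t = m * s := by
  constructor
  · intro ht
    obtain ⟨k, rfl⟩ := intCast_surjective t
    rw [map_intCast, intCast_zmod_eq_zero_iff_dvd] at ht
    obtain ⟨s, rfl⟩ := ht
    exact ⟨s, by push_cast; rfl⟩
  · rintro ⟨s, rfl⟩
    rw [map_mul, map_natCast, natCast_self, zero_mul]

def mulLeftEmbedding (hN : m * n = N) : ZMod n →+ ZMod N :=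
  lift n ⟨zmultiplesHom _ (m : ZMod N), by
    rw [zmultiplesHom_apply, natCast_zsmul, nsmul_eq_mul, ← Nat.cast_mul, mul_comm, hN,
      natCast_self]⟩

lemma mulLeftEmbedding_intCast (hN : m * n = N) (k : ℤ) :
    mulLeftEmbedding hN k = m * k := by
  rw [mulLeftEmbedding, lift_coe, zmultiplesHom_apply, zsmul_eq_mul, mul_comm]

lemma mulLeftEmbedding_injective (hN : m * n = N) (hm : m ≠ 0) :
    Function.Injective (mulLeftEmbedding hN) := by
  rw [injective_iff_map_eq_zero]
  intro c hc
  obtain ⟨k, rfl⟩ := intCast_surjective c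
  rw [mulLeftEmbedding_intCast, ← Int.cast_natCast, ← Int.cast_mul,
    intCast_zmod_eq_zero_iff_dvd, ← hN, Nat.cast_mul] at hc
  rw [intCast_zmod_eq_zero_iff_dvd]
  exact Int.dvd_of_mul_dvd_mul_left (by exact_mod_cast hm) hc

lemma exists_mulLeftEmbedding_eq (hN : m * n = N) (hn : n ≠ 0) {t : ZMod N}
    (ht : n * t = 0) : ∃ c, mulLeftEmbedding hN c = t := by
  obtain ⟨k, rfl⟩ := intCast_surjective t
  rw [← Int.cast_natCast, ← Int.cast_mul, intCast_zmod_eq_zero_iff_dvd, ← hN, Nat.cast_mul,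
    mul_comm (m : ℤ)] at ht
  obtain ⟨j, rfl⟩ := Int.dvd_of_mul_dvd_mul_left (by exact_mod_cast hn) ht
  exact ⟨j, by rw [mulLeftEmbedding_intCast]; push_cast; rfl⟩

lemma natCast_mul_mulLeftEmbedding (hN : m * n = N) (c : ZMod n) :
    n * mulLeftEmbedding hN c = 0 := by
  obtain ⟨k, rfl⟩ := intCast_surjective c
  rw [mulLeftEmbedding_intCast, ← mul_assoc, ← Nat.cast_mul, mul_comm n m, hN, natCast_self,
    zero_mul]

lemma mem_closure_const_one_iff {ι : Type*} (v : ι → ZMod n) :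
    v ∈ AddSubgroup.closure {fun _ => 1} ↔ ∃ c, ∀ i, v i = c := by
  rw [← AddSubgroup.zmultiples_eq_closure, AddSubgroup.mem_zmultiples_iff]
  constructor
  · rintro ⟨k, rfl⟩
    exact ⟨k, fun i => by simp⟩
  · rintro ⟨c, hc⟩
    obtain ⟨k, rfl⟩ := intCast_surjective c
    exact ⟨k, funext fun i => by simp [hc]⟩

end ZMod

namespace Circulant1025

def sumZeroModFive : AddSubgroup (Fin 5 → ZMod 1025) where
  carrier := {a | ZMod.castHom (by norm_num : 5 ∣ 1025) (ZMod 5) (∑ i, a i) = 0}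
  add_mem' := by
    intro a b ha hb
    simp_all only [Set.mem_ofPred_eq, Pi.add_apply, Finset.sum_add_distrib, map_add, add_zero]
  zero_mem' := by simp
  neg_mem' := by
    intro a ha
    simp_all only [Set.mem_ofPred_eq, Pi.neg_apply, Finset.sum_neg_distrib, map_neg, neg_zero]

def onesΓ : sumZeroModFive :=
  ⟨fun _ => 1, show ZMod.castHom _ (ZMod 5) (∑ _ : Fin 5, (1 : ZMod 1025)) = 0 by decide⟩

abbrev Γ := sumZeroModFive ⧸ AddSubgroup.closure {onesΓ}

abbrev Q := (Fin 5 → ZMod 1025) ⧸ AddSubgroup.closure {(fun _ => 1 : Fin 5 → ZMod 1025)}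

def circB : Matrix (Fin 5) (Fin 5) (ZMod 1025) :=
  of fun j k => ((![256, -64, 16, -4, 1] : Fin 5 → ℤ) (k - j) : ZMod 1025)

def bCol : Fin 5 → ZMod 1025 := ![1, -4, 16, -64, 256]

def bRow : Fin 5 → ZMod 1025 := ![256, -64, 16, -4, 1]

lemma circB_eq_vecMulVec : circB = vecMulVec bCol bRow := by
  ext j k
  fin_cases j <;> fin_cases k <;> decide

lemma circB_mulVec (a : Fin 5 → ZMod 1025) : circB *ᵥ a = (bRow ⬝ᵥ a) • bCol := by
  rw [circB_eq_vecMulVec, vecMulVec_mulVec, op_smul_eq_smul]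

lemma smul_bCol_mem_closure_iff (t : ZMod 1025) :
    t • bCol ∈ AddSubgroup.closure {(fun _ => 1 : Fin 5 → ZMod 1025)} ↔ 5 * t = 0 := by
  rw [ZMod.mem_closure_const_one_iff]
  constructor
  · rintro ⟨c, hc⟩
    have h0 := hc 0
    have h1 := hc 1
    simp only [bCol, Pi.smul_apply, smul_eq_mul, cons_val_zero, cons_val_one] at h0 h1
    linear_combination h0 - h1
  · intro ht
    have hCol : ∀ i, bCol i = 1 + 5 * (![0, -1, 3, -13, 51] : Fin 5 → ZMod 1025) i := by decide
    refine ⟨t, fun i => ?_⟩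
    rw [Pi.smul_apply, smul_eq_mul, hCol]
    linear_combination (![0, -1, 3, -13, 51] : Fin 5 → ZMod 1025) i * ht

lemma mk_smul_bCol_eq_zero_iff (t : ZMod 1025) :
    ((t • bCol : Fin 5 → ZMod 1025) : Q) = 0 ↔ 5 * t = 0 := by
  rw [QuotientAddGroup.eq_zero_iff, smul_bCol_mem_closure_iff]

def inducedMap : Γ →+ Q :=
  QuotientAddGroup.map _ _ (circB.mulVecLin.toAddMonoidHom.comp sumZeroModFive.subtype) <| by
    rw [AddSubgroup.closure_le]
    rintro _ rfl
    change circB *ᵥ (fun _ => 1) ∈ AddSubgroup.closure {(fun _ => 1 : Fin 5 → ZMod 1025)}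
    rw [circB_mulVec, smul_bCol_mem_closure_iff]
    decide

lemma inducedMap_mk (a : sumZeroModFive) :
    inducedMap (a : Γ) = (((bRow ⬝ᵥ a) • bCol : Fin 5 → ZMod 1025) : Q) := by
  rw [← circB_mulVec]; rfl

lemma exists_bRow_dotProduct_eq_five_mul (a : sumZeroModFive) : ∃ s, bRow ⬝ᵥ a = 5 * s := by
  obtain ⟨s, hs⟩ := (ZMod.castHom_eq_zero_iff_exists_eq_mul _ _).mp a.2
  refine ⟨s + 51 * a.1 0 - 13 * a.1 1 + 3 * a.1 2 - a.1 3, ?_⟩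
  rw [Fin.sum_univ_five] at hs
  simp only [dotProduct, bRow, Fin.sum_univ_five, cons_val_zero, cons_val_one, cons_val]
  linear_combination hs

def fiveE4 : sumZeroModFive :=
  ⟨![0, 0, 0, 0, 5],
    show ZMod.castHom _ (ZMod 5) (∑ i, (![0, 0, 0, 0, 5] : Fin 5 → ZMod 1025) i) = 0 by decide⟩

lemma inducedMap_fiveE4 :
    inducedMap fiveE4 = (((5 : ZMod 1025) • bCol : Fin 5 → ZMod 1025) : Q) := by
  rw [inducedMap_mk, show bRow ⬝ᵥ (fiveE4 : Fin 5 → ZMod 1025) = 5 by decide]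

lemma range_inducedMap : inducedMap.range = AddSubgroup.zmultiples (inducedMap fiveE4) := by
  refine le_antisymm ?_ (AddSubgroup.zmultiples_le.mpr ⟨_, rfl⟩)
  rintro _ ⟨x, rfl⟩
  obtain ⟨a, rfl⟩ := QuotientAddGroup.mk_surjective x
  obtain ⟨s, hs⟩ := exists_bRow_dotProduct_eq_five_mul a
  obtain ⟨k, rfl⟩ := ZMod.intCast_surjective s
  refine ⟨k, ?_⟩
  change k • inducedMap fiveE4 = _
  rw [inducedMap_fiveE4, inducedMap_mk, hs, ← QuotientAddGroup.mk_zsmul,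
    ← Int.cast_smul_eq_zsmul (ZMod 1025), smul_smul, mul_comm]

lemma addOrderOf_inducedMap_fiveE4 : addOrderOf (inducedMap fiveE4) = 41 := by
  have : Fact (Nat.Prime 41) := ⟨by norm_num⟩
  apply addOrderOf_eq_prime
  · rw [inducedMap_fiveE4, ← QuotientAddGroup.mk_nsmul, ← Nat.cast_smul_eq_nsmul (ZMod 1025),
      smul_smul, mk_smul_bCol_eq_zero_iff]
    decide
  · rw [inducedMap_fiveE4, Ne, mk_smul_bCol_eq_zero_iff]
    decide

lemma nonempty_range_addEquiv : Nonempty (inducedMap.range ≃+ ZMod 41) := by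
  have hcard : Nat.card inducedMap.range = 41 := by
    rw [range_inducedMap, Nat.card_zmultiples, addOrderOf_inducedMap_fiveE4]
  have : Fact (Nat.Prime 41) := ⟨by norm_num⟩
  exact ⟨(zmodAddCyclicAddEquiv (isAddCyclic_of_prime_card hcard)).symm.trans
    (ZMod.ringEquivCongr hcard).toAddEquiv⟩

lemma mem_ker_inducedMap_iff (a : sumZeroModFive) :
    (a : Γ) ∈ inducedMap.ker ↔ 5 * (bRow ⬝ᵥ a) = 0 := by
  rw [AddMonoidHom.mem_ker, inducedMap_mk, mk_smul_bCol_eq_zero_iff]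

lemma mem_closure_onesΓ_iff (x : sumZeroModFive) :
    x ∈ AddSubgroup.closure {onesΓ} ↔ ∃ c, ∀ i, (x : Fin 5 → ZMod 1025) i = c := by
  rw [← ZMod.mem_closure_const_one_iff, ← AddSubgroup.zmultiples_eq_closure,
    ← AddSubgroup.zmultiples_eq_closure, AddSubgroup.mem_zmultiples_iff,
    AddSubgroup.mem_zmultiples_iff]
  simp only [Subtype.ext_iff, AddSubgroup.coe_zsmul]
  rfl

abbrev torsionFive : ZMod 5 →+ ZMod 1025 := ZMod.mulLeftEmbedding (by norm_num : 205 * 5 = 1025)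

def kerLift : ZMod 5 × (Fin 3 → ZMod 1025) →+ sumZeroModFive :=
  AddMonoidHom.mk'
    (fun p => ⟨![0, p.2 0, p.2 1, p.2 2, torsionFive p.1 + 64 * p.2 0 - 16 * p.2 1 + 4 * p.2 2], by
      obtain ⟨k, hk⟩ := ZMod.intCast_surjective p.1
      refine (ZMod.castHom_eq_zero_iff_exists_eq_mul _ _).mpr
        ⟨41 * k + 13 * p.2 0 - 3 * p.2 1 + p.2 2, ?_⟩
      simp only [← hk, ZMod.mulLeftEmbedding_intCast, Nat.cast_ofNat, Fin.sum_univ_five,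
        cons_val_zero, cons_val_one, zero_add, cons_val]
      ring⟩)
    (fun p q => by
      ext i
      fin_cases i <;> simp
      ring)

lemma bRow_dotProduct_kerLift (p : ZMod 5 × (Fin 3 → ZMod 1025)) :
    bRow ⬝ᵥ (kerLift p : Fin 5 → ZMod 1025) = torsionFive p.1 := by
  simp only [dotProduct, bRow, kerLift, AddMonoidHom.mk'_apply, Fin.sum_univ_five, cons_val_zero,
    mul_zero, cons_val_one, neg_mul, zero_add, cons_val, one_mul]
  ring

def kerParam : ZMod 5 × (Fin 3 → ZMod 1025) →+ Γ := (QuotientAddGroup.mk' _).comp kerLift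

lemma kerParam_injective : Function.Injective kerParam := by
  rw [injective_iff_map_eq_zero]
  rintro ⟨c, b⟩ h
  obtain ⟨d, hd⟩ := (mem_closure_onesΓ_iff _).mp ((QuotientAddGroup.eq_zero_iff _).mp h)
  obtain rfl : d = 0 := (hd 0).symm
  obtain rfl : b = 0 := by
    ext i
    fin_cases i
    exacts [hd 1, hd 2, hd 3]
  have hc : torsionFive c = 0 := by simpa [kerLift] using hd 4
  exact Prod.ext (ZMod.mulLeftEmbedding_injective _ (by norm_num) (hc.trans (map_zero _).symm)) rfl

lemma ker_inducedMap_eq_range_kerParam : inducedMap.ker = kerParam.range := by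
  refine le_antisymm (fun y hy => ?_) ?_
  · obtain ⟨a, rfl⟩ := QuotientAddGroup.mk_surjective y
    rw [mem_ker_inducedMap_iff] at hy
    obtain ⟨c, hc⟩ := ZMod.exists_mulLeftEmbedding_eq (by norm_num : 205 * 5 = 1025) (by norm_num)
      (t := bRow ⬝ᵥ a - 205 * a.1 0) (by
        have h1025 : (1025 : ZMod 1025) = 0 := by decide
        push_cast
        linear_combination hy - a.1 0 * h1025)
    refine ⟨(c, ![a.1 1 - a.1 0, a.1 2 - a.1 0, a.1 3 - a.1 0]), ?_⟩
    refine QuotientAddGroup.eq.mpr ((mem_closure_onesΓ_iff _).mpr ⟨a.1 0, fun i => ?_⟩)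
    fin_cases i <;> simp [kerLift, hc, bRow, dotProduct, Fin.sum_univ_five]
    ring
  · rintro _ ⟨p, rfl⟩
    rw [kerParam, AddMonoidHom.comp_apply, QuotientAddGroup.mk'_apply, mem_ker_inducedMap_iff,
      bRow_dotProduct_kerLift]
    exact ZMod.natCast_mul_mulLeftEmbedding _ _

lemma nonempty_ker_addEquiv : Nonempty (inducedMap.ker ≃+ (ZMod 5 × (Fin 3 → ZMod 1025))) :=
  ⟨(AddEquiv.addSubgroupCongr ker_inducedMap_eq_range_kerParam).trans
    (AddMonoidHom.ofInjective kerParam_injective).symm⟩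

end Circulant1025

theorem stmt_17 (hdvd : (5 : ℕ) ∣ 1025)
    (Bz : Matrix (Fin 5) (Fin 5) (ZMod 1025))
    (hB : ∀ j k, Bz j k = ((![256, -64, 16, -4, 1] : Fin 5 → ℤ) (k - j) : ZMod 1025))
    (S : AddSubgroup (Fin 5 → ZMod 1025))
    (hS : ∀ a, a ∈ S ↔ (ZMod.castHom hdvd (ZMod 5)) (∑ i, a i) = 0)
    (ones : S) (hones : (ones : Fin 5 → ZMod 1025) = fun _ => 1)
    (f : (S ⧸ AddSubgroup.closure {ones}) →+
      ((Fin 5 → ZMod 1025) ⧸ AddSubgroup.closure {(fun _ => 1 : Fin 5 → ZMod 1025)}))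
    (hf : ∀ a : S, f (QuotientAddGroup.mk a) =
      QuotientAddGroup.mk (Bz.mulVec (a : Fin 5 → ZMod 1025))) :
    Nonempty (f.range ≃+ ZMod 41) ∧
      Nonempty (f.ker ≃+ (ZMod 5 × (Fin 3 → ZMod 1025))) := by
  obtain rfl : Bz = Circulant1025.circB := Matrix.ext hB
  obtain rfl : S = Circulant1025.sumZeroModFive := AddSubgroup.ext hS
  obtain rfl : ones = Circulant1025.onesΓ := Subtype.ext hones
  obtain rfl : f = Circulant1025.inducedMap :=
    QuotientAddGroup.addMonoidHom_ext _ (AddMonoidHom.ext hf)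
  exact ⟨Circulant1025.nonempty_range_addEquiv, Circulant1025.nonempty_ker_addEquiv⟩
end
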